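/- arXiv:2003.06269 — 2 statements merged into one kernel-verified Lean document; each statement's English description precedes it below -/
import Mathlib

section
/- For all N ≥ 2, the number of derangements of an N-element set equals the floor of N!/e + 1/2, i.e., the nearest integer to N!/e. -/
/-!
By inclusion–exclusion, the number `D N` of derangements satisfies
`D N / N! = ∑_{k ≤ N} (-1)^k / k!`, a partial sum of the series for `e⁻¹`. So `|N!/e - D N|`
is `N!` times the tail of that series, at most `(N + 2) / (N + 1)^2 < 1/2` once `N ≥ 2`;
hence `D N` is the integer nearest to `N!/e`.
-/

/-- `numDerangementsOf N` is the number of fixed-point-free permutations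
(derangements) of an `N`-element set. -/
noncomputable def numDerangementsOf (N : ℕ) : ℕ :=
  Nat.card {σ : Equiv.Perm (Fin N) // ∀ i, σ i ≠ i}

open Finset Nat

lemma numDerangementsOf_eq_numDerangements (n : ℕ) :
    numDerangementsOf n = numDerangements n := by
  rw [numDerangementsOf, Nat.card_eq_fintype_card, ← card_derangements_fin_eq_numDerangements]
  exact Fintype.card_congr (Equiv.subtypeEquivRight fun _ => Iff.rfl)

lemma numDerangements_div_factorial (n : ℕ) :
    (numDerangements n : ℝ) / n ! = ∑ k ∈ range (n + 1), (-1 : ℝ) ^ k / k ! := by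
  rw [← Int.cast_natCast, numDerangements_sum]
  push_cast
  rw [sum_div]
  refine sum_congr rfl fun k hk => ?_
  have hkn : k ≤ n := mem_range_succ_iff.mp hk
  rw [ascFactorial_eq_div, add_tsub_cancel_of_le hkn]
  push_cast [factorial_dvd_factorial hkn]
  field

lemma abs_factorial_div_exp_sub_numDerangements_le (n : ℕ) :
    |(n ! : ℝ) / Real.exp 1 - numDerangements n| ≤ (n + 2) / (n + 1) ^ 2 := by
  have hfac : (0 : ℝ) < n ! := by positivity
  have htail := Real.exp_bound (x := -1) (by simp) (n := n + 1) n.succ_pos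
  rw [← numDerangements_div_factorial, abs_neg, abs_one, one_pow, one_mul, Real.exp_neg] at htail
  calc |(n ! : ℝ) / Real.exp 1 - numDerangements n|
      = n ! * |(Real.exp 1)⁻¹ - numDerangements n / n !| := by
        rw [← abs_of_pos hfac, ← abs_mul, abs_of_pos hfac]
        congr 1
        field
    _ ≤ n ! * ((n + 1).succ / ((n + 1) ! * (n + 1 : ℕ))) := by gcongr
    _ = (n + 2) / (n + 1) ^ 2 := by
        rw [factorial_succ]
        push_cast
        field

lemma round_eq_of_abs_sub_lt {α : Type*} [Field α] [LinearOrder α] [IsStrictOrderedRing α]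
    [FloorRing α] {x : α} {n : ℤ} (h : |x - n| < 1 / 2) : round x = n := by
  rw [round_eq_iff]
  obtain ⟨hlo, hhi⟩ := abs_lt.mp h
  constructor <;> linarith

theorem derangements_floor_formula (N : ℕ) (hN : 2 ≤ N) :
    (numDerangementsOf N : ℤ) = ⌊(Nat.factorial N : ℝ) / Real.exp 1 + 1 / 2⌋ := by
  rw [← round_eq, numDerangementsOf_eq_numDerangements, eq_comm]
  apply round_eq_of_abs_sub_lt
  have hN' : (2 : ℝ) ≤ N := mod_cast hN
  calc |(N ! : ℝ) / Real.exp 1 - (numDerangements N : ℤ)|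
      ≤ (N + 2) / (N + 1) ^ 2 := mod_cast abs_factorial_div_exp_sub_numDerangements_le N
    _ < 1 / 2 := by
        rw [div_lt_div_iff₀ (by positivity) two_pos]
        nlinarith
end

section
/- For all N ≥ 4, P_N = (N-1) * ( P_{N-1} + P_{N-3} * (N-2) + (-1)^N ), where P_N is the number of derangements of N elements containing at least one 2-cycle. -/
/-!
A derangement has a 2-cycle unless all of its cycles have length at least 3, so
`P N = D N - Q N`, where `D` counts derangements and `Q` counts permutations without cycles of
length `≤ 2`. Removing the new point from its cycle in a permutation of `Option α` sets up a
bijection between such permutations of `Option α` sending `none` to `some j` and the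
derangements of `α` all of whose 2-cycles contain `j`; those with a 2-cycle `(j k)` are in turn
the permutations of `α ∖ {j, k}` without short cycles. This gives
`Q (n + 1) = n * (Q n + (n - 1) * Q (n - 2))`, which combined with the derangement recursions
`D (n + 2) = (n + 1) * (D n + D (n + 1))` and `D (n + 1) = (n + 1) * D n - (-1) ^ n` yields the
recursion for `P`.
-/

open Equiv Equiv.Perm Finset

/-- Number of fixed-point-free permutations of an `N`-element set having at least
one 2-cycle. -/
noncomputable def numPairedDerangements (N : ℕ) : ℕ :=
  Nat.card {σ : Equiv.Perm (Fin N) // (∀ i, σ i ≠ i) ∧ 2 ∈ σ.cycleType}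

theorem Nat.card_subtype_eq_sum_card_fiberwise {β ι : Type*} [Finite β] [Fintype ι]
    (f : β → ι) (p : β → Prop) :
    Nat.card {x // p x} = ∑ i, Nat.card {x // p x ∧ f x = i} := by
  rw [← Nat.card_congr (sigmaFiberEquiv fun x : {x // p x} => f x), Nat.card_sigma]
  exact Fintype.sum_congr _ _ fun i => Nat.card_congr (subtypeSubtypeEquivSubtypeInter p (f · = i))

namespace Equiv.Perm

variable {α : Type*}

def NoShortCycles (σ : Perm α) : Prop := ∀ a, σ a ≠ a ∧ σ (σ a) ≠ a

/-- Inserting a new point just before `j` in its cycle turns `τ` into a permutation without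
short cycles exactly when this holds. -/
def NoShortCyclesAwayFrom (j : α) (τ : Perm α) : Prop :=
  ∀ a, τ a ≠ a ∧ (a ≠ j → τ a ≠ j → τ (τ a) ≠ a)

lemma noShortCycles_iff_noShortCyclesAwayFrom_and (j : α) (τ : Perm α) :
    NoShortCycles τ ↔ NoShortCyclesAwayFrom j τ ∧ τ (τ j) ≠ j := by
  simp only [NoShortCycles, NoShortCyclesAwayFrom]
  grind [Equiv.apply_eq_iff_eq]

lemma noShortCycles_permCongr_iff {β : Type*} (e : α ≃ β) (σ : Perm α) :
    NoShortCycles (e.permCongr σ) ↔ NoShortCycles σ := by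
  simp only [NoShortCycles, permCongr_apply]
  rw [e.surjective.forall]
  simp

lemma noShortCycles_iff_ofSubtype (p : α → Prop) [DecidablePred p] (ρ : Perm (Subtype p)) :
    NoShortCycles ρ ↔ ∀ a, p a → ofSubtype ρ a ≠ a ∧ ofSubtype ρ (ofSubtype ρ a) ≠ a := by
  simp only [NoShortCycles, Subtype.forall, ne_eq, Subtype.ext_iff]
  refine forall₂_congr fun a ha => ?_
  rw [ofSubtype_apply_of_mem ρ ha, ofSubtype_apply_of_mem ρ (ρ ⟨a, ha⟩).2]

variable [DecidableEq α]

lemma two_mem_cycleType_iff [Fintype α] {σ : Perm α} :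
    2 ∈ σ.cycleType ↔ ∃ a, σ a ≠ a ∧ σ (σ a) = a := by
  rw [mem_cycleType_iff]
  constructor
  · rintro ⟨c, τ, rfl, hd, -, hc⟩
    obtain ⟨x, y, hxy, rfl⟩ := card_support_eq_two.1 hc
    have hx : τ x = x := (hd x).resolve_left (by simpa using hxy.symm)
    have hy : τ y = y := (hd y).resolve_left (by simpa using hxy)
    exact ⟨x, by simpa [hx] using hxy.symm, by simp [hx, hy]⟩
  · rintro ⟨a, ha, haa⟩
    refine ⟨swap a (σ a), swap a (σ a) * σ, by simp [← mul_assoc], fun x => ?_,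
      isCycle_swap ha.symm, card_support_swap ha.symm⟩
    by_cases hx : x = a ∨ x = σ a
    · right
      rcases hx with rfl | rfl <;> simp [haa]
    · left
      push Not at hx
      exact swap_apply_of_ne_of_ne hx.1 hx.2

lemma decomposeOption_symm_some_apply_none (j : α) (τ : Perm α) :
    decomposeOption.symm (some j, τ) none = some j := by
  simp [decomposeOption_symm_apply]

lemma decomposeOption_symm_some_apply_some (j : α) (τ : Perm α) (a : α) :
    decomposeOption.symm (some j, τ) (some a) = if τ a = j then none else some (τ a) := by
  simp only [decomposeOption_symm_apply, Perm.mul_apply, optionCongr_apply, Option.map_some]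
  split_ifs with h
  · simp [h]
  · exact swap_apply_of_ne_of_ne (by simp) (by simpa using h)

lemma noShortCycles_decomposeOption_symm_some_iff (j : α) (τ : Perm α) :
    NoShortCycles (decomposeOption.symm (some j, τ)) ↔ NoShortCyclesAwayFrom j τ := by
  have hnone := decomposeOption_symm_some_apply_none j τ
  have hsome := decomposeOption_symm_some_apply_some j τ
  simp only [NoShortCycles, NoShortCyclesAwayFrom, Option.forall]
  generalize (decomposeOption.symm (some j, τ) : Option α → Option α) = f at *
  grind

lemma not_noShortCycles_decomposeOption_symm_none (τ : Perm α) :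
    ¬ NoShortCycles (decomposeOption.symm (none, τ)) :=
  fun h => (h none).1 (by simp)

lemma noShortCyclesAwayFrom_and_swap_iff {j k : α} (hjk : j ≠ k) (τ : Perm α) :
    NoShortCyclesAwayFrom j τ ∧ τ j = k ∧ τ k = j ↔
      (∀ a, ¬ (a ≠ j ∧ a ≠ k) → (swap j k * τ) a = a) ∧
        ∀ a, (a ≠ j ∧ a ≠ k) → (swap j k * τ) a ≠ a ∧ (swap j k * τ) ((swap j k * τ) a) ≠ a := by
  simp only [NoShortCyclesAwayFrom, Perm.mul_apply, swap_apply_def]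
  grind

end Equiv.Perm

noncomputable def numNoShortCycles (n : ℕ) : ℕ :=
  Nat.card {σ : Perm (Fin n) // NoShortCycles σ}

theorem card_noShortCycles (α : Type*) [Fintype α] :
    Nat.card {σ : Perm α // NoShortCycles σ} = numNoShortCycles (Fintype.card α) :=
  Nat.card_congr <| (Fintype.equivFin α).permCongr.subtypeEquiv fun σ =>
    (noShortCycles_permCongr_iff _ σ).symm

section Counting

variable {α : Type*}

theorem card_noShortCycles_subtype (p : α → Prop) [DecidablePred p] :
    Nat.card {ρ : Perm (Subtype p) // NoShortCycles ρ} =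
      Nat.card {f : Perm α // (∀ a, ¬ p a → f a = a) ∧ ∀ a, p a → f a ≠ a ∧ f (f a) ≠ a} :=
  Nat.card_congr <|
    ((Perm.subtypeEquivSubtypePerm p).subtypeEquiv (noShortCycles_iff_ofSubtype p)).trans
      (subtypeSubtypeEquivSubtypeInter _ _)

variable [Fintype α] [DecidableEq α]

theorem card_noShortCycles_option_eq_sum :
    Nat.card {σ : Perm (Option α) // NoShortCycles σ} =
      ∑ j : α, Nat.card {τ : Perm α // NoShortCyclesAwayFrom j τ} := by
  rw [Nat.card_congr ((decomposeOption.subtypeEquiv fun σ => by rw [symm_apply_apply]).trans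
    (subtypeProdEquivSigmaSubtype fun o τ => NoShortCycles (decomposeOption.symm (o, τ)))),
    Nat.card_sigma, Fintype.sum_option]
  have hnone : Nat.card {τ : Perm α // NoShortCycles (decomposeOption.symm (none, τ))} = 0 :=
    Nat.card_eq_zero.2 <| .inl ⟨fun τ => not_noShortCycles_decomposeOption_symm_none τ.1 τ.2⟩
  simp only [hnone, zero_add, noShortCycles_decomposeOption_symm_some_iff]

theorem card_noShortCyclesAwayFrom (j : α) :
    Nat.card {τ : Perm α // NoShortCyclesAwayFrom j τ} =
      Nat.card {τ : Perm α // NoShortCycles τ} +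
        Nat.card {τ : Perm α // NoShortCyclesAwayFrom j τ ∧ τ (τ j) = j} := by
  classical
  have hdisj : Disjoint (NoShortCycles : Perm α → Prop)
      (fun τ => NoShortCyclesAwayFrom j τ ∧ τ (τ j) = j) := by
    rw [disjoint_iff_inf_le]
    exact fun τ ⟨h, _, hj⟩ => ((noShortCycles_iff_noShortCyclesAwayFrom_and j τ).1 h).2 hj
  calc Nat.card {τ : Perm α // NoShortCyclesAwayFrom j τ}
      = Nat.card {τ : Perm α // NoShortCycles τ ∨ (NoShortCyclesAwayFrom j τ ∧ τ (τ j) = j)} :=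
        Nat.card_congr <| subtypeEquivRight fun τ => by
          rw [noShortCycles_iff_noShortCyclesAwayFrom_and j]
          by_cases h : τ (τ j) = j <;> simp [h]
    _ = _ := by rw [Nat.card_congr (subtypeOrEquiv _ _ hdisj), Nat.card_sum]

theorem card_noShortCyclesAwayFrom_with_swap {j k : α} (hjk : j ≠ k) :
    Nat.card {τ : Perm α // (NoShortCyclesAwayFrom j τ ∧ τ (τ j) = j) ∧ τ j = k} =
      numNoShortCycles (Fintype.card α - 2) :=
  calc _ = Nat.card {τ : Perm α // NoShortCyclesAwayFrom j τ ∧ τ j = k ∧ τ k = j} :=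
        Nat.card_congr <| subtypeEquivRight fun τ => by grind
    _ = Nat.card {f : Perm α // (∀ a, ¬ (a ≠ j ∧ a ≠ k) → f a = a) ∧
          ∀ a, (a ≠ j ∧ a ≠ k) → f a ≠ a ∧ f (f a) ≠ a} :=
        Nat.card_congr <|
          (Equiv.mulLeft (swap j k)).subtypeEquiv (noShortCyclesAwayFrom_and_swap_iff hjk)
    _ = Nat.card {ρ : Perm {a // a ≠ j ∧ a ≠ k} // NoShortCycles ρ} :=
        (card_noShortCycles_subtype _).symm
    _ = numNoShortCycles (Fintype.card α - 2) := by
        have : ({a | a ≠ j ∧ a ≠ k} : Finset α) = {j, k}ᶜ := by ext; simp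
        rw [card_noShortCycles, Fintype.card_subtype, this, card_compl, card_pair hjk]

theorem card_noShortCyclesAwayFrom_with_twoCycle (j : α) :
    Nat.card {τ : Perm α // NoShortCyclesAwayFrom j τ ∧ τ (τ j) = j} =
      (Fintype.card α - 1) * numNoShortCycles (Fintype.card α - 2) := by
  have hfiber (k : α) :
      Nat.card {τ : Perm α // (NoShortCyclesAwayFrom j τ ∧ τ (τ j) = j) ∧ τ j = k} =
        if k = j then 0 else numNoShortCycles (Fintype.card α - 2) := by
    split_ifs with hkj
    · subst hkj
      exact Nat.card_eq_zero.2 <| .inl ⟨fun τ => (τ.2.1.1 k).1 τ.2.2⟩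
    · exact card_noShortCyclesAwayFrom_with_swap (Ne.symm hkj)
  rw [Nat.card_subtype_eq_sum_card_fiberwise (· j), Fintype.sum_congr _ _ hfiber, sum_ite,
    sum_const_zero, zero_add, sum_const, smul_eq_mul, filter_ne', card_erase_of_mem (mem_univ j),
    card_univ]

theorem card_noShortCycles_option :
    Nat.card {σ : Perm (Option α) // NoShortCycles σ} =
      Fintype.card α * (numNoShortCycles (Fintype.card α) +
        (Fintype.card α - 1) * numNoShortCycles (Fintype.card α - 2)) := by
  rw [card_noShortCycles_option_eq_sum]
  simp only [card_noShortCyclesAwayFrom, card_noShortCyclesAwayFrom_with_twoCycle,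
    card_noShortCycles, sum_const, card_univ, smul_eq_mul]

end Counting

theorem numNoShortCycles_succ (n : ℕ) :
    numNoShortCycles (n + 1) = n * (numNoShortCycles n + (n - 1) * numNoShortCycles (n - 2)) := by
  simpa using (card_noShortCycles (Option (Fin n))).symm.trans card_noShortCycles_option

theorem card_pairedDerangements_add_card_noShortCycles (α : Type*) [Fintype α] [DecidableEq α] :
    Nat.card {σ : Perm α // (∀ i, σ i ≠ i) ∧ 2 ∈ σ.cycleType} +
      Nat.card {σ : Perm α // NoShortCycles σ} = numDerangements (Fintype.card α) := by
  classical
  have hdisj : Disjoint (fun σ : Perm α => (∀ i, σ i ≠ i) ∧ 2 ∈ σ.cycleType) NoShortCycles := by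
    rw [disjoint_iff_inf_le]
    rintro σ ⟨⟨-, h2⟩, hσ⟩
    obtain ⟨a, -, ha⟩ := two_mem_cycleType_iff.1 h2
    exact (hσ a).2 ha
  calc _ = Nat.card {σ : Perm α // ((∀ i, σ i ≠ i) ∧ 2 ∈ σ.cycleType) ∨ NoShortCycles σ} := by
        rw [Nat.card_congr (subtypeOrEquiv _ _ hdisj), Nat.card_sum]
    _ = Nat.card (derangements α) := Nat.card_congr <| subtypeEquivRight fun σ => by
        change _ ↔ ∀ x, σ x ≠ x
        rw [two_mem_cycleType_iff, NoShortCycles]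
        grind
    _ = _ := by rw [Nat.card_eq_fintype_card, card_derangements_eq_numDerangements]

theorem numPairedDerangements_add_numNoShortCycles (n : ℕ) :
    numPairedDerangements n + numNoShortCycles n = numDerangements n := by
  have h := card_pairedDerangements_add_card_noShortCycles (Fin n)
  rwa [Fintype.card_fin] at h

theorem pairedDerangements_recursion' (N : ℕ) (hN : 4 ≤ N) :
    (numPairedDerangements N : ℤ) =
      (N - 1) * ((numPairedDerangements (N - 1) : ℤ) +
        (numPairedDerangements (N - 3) : ℤ) * (N - 2) + (-1) ^ N) := by
  obtain ⟨m, rfl⟩ : ∃ m, N = m + 4 := ⟨N - 4, by omega⟩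
  have hP (n : ℕ) : (numPairedDerangements n : ℤ) = numDerangements n - numNoShortCycles n := by
    rw [← numPairedDerangements_add_numNoShortCycles]
    push_cast
    ring
  have hQ : (numNoShortCycles (m + 4) : ℤ) =
      (m + 3) * (numNoShortCycles (m + 3) + (m + 2) * numNoShortCycles (m + 1)) := by
    exact_mod_cast numNoShortCycles_succ (m + 3)
  have hD : (numDerangements (m + 4) : ℤ) =
      (m + 3) * (numDerangements (m + 2) + numDerangements (m + 3)) := by
    exact_mod_cast numDerangements_add_two (m + 2)
  have hD' := numDerangements_succ (m + 1)
  rw [show m + 4 - 1 = m + 3 by omega, show m + 4 - 3 = m + 1 by omega, hP, hP, hP]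
  push_cast at hD' ⊢
  linear_combination hD - hQ + (m + 3) * hD'
end
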